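/- arXiv:1811.09027 — 2 statements merged into one kernel-verified Lean document; each statement's English description precedes it below -/
import Mathlib

section
/- Let $M = (N, \mathcal{I})$ be a matroid on a finite ground set $N$ with rank function $r$, let $S \subseteq N$, and let $\alpha$ be a positive integer. Then $|T| \le \alpha \cdot r(T)$ holds for every $T \subseteq S$ if and only if $S$ can be written as the union of at most $\alpha$ independent sets of $M$, i.e.\ there exist $I_1, \dots, I_\alpha \in \mathcal{I}$ with $S = I_1 \cup \dots \cup I_\alpha$. -/
open scoped Classical BigOperators

structure FinMatroid (α : Type*) where
  E : Finset α
  Indep : Finset α → Prop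
  indep_subset_ground : ∀ ⦃I⦄, Indep I → I ⊆ E
  indep_empty : Indep ∅
  indep_subset : ∀ ⦃I J⦄, Indep J → I ⊆ J → Indep I
  indep_exchange : ∀ ⦃I J⦄, Indep I → Indep J → I.card < J.card →
    ∃ e ∈ J \ I, Indep (insert e I)

/-- The rank function of a matroid: the maximum cardinality of an independent subset. -/
noncomputable def FinMatroid.rank {α : Type*} (M : FinMatroid α) (A : Finset α) : ℕ :=
  A.powerset.sup fun I => if M.Indep I then I.card else 0

namespace FinMatroid

variable {β : Type*} (M : FinMatroid β)

lemma card_le_rank {I A : Finset β} (hI : M.Indep I) (hIA : I ⊆ A) :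
    I.card ≤ M.rank A := by
  have hm : I ∈ A.powerset := Finset.mem_powerset.2 hIA
  have := Finset.le_sup (f := fun I => if M.Indep I then I.card else 0) hm
  simpa [hI, FinMatroid.rank] using this

lemma exists_basis (A : Finset β) : ∃ I, M.Indep I ∧ I ⊆ A ∧ I.card = M.rank A := by
  obtain ⟨I, hmem, hval⟩ := Finset.exists_mem_eq_sup A.powerset ⟨∅, by simp⟩
    (fun I => if M.Indep I then I.card else 0)
  by_cases h : M.Indep I
  · exact ⟨I, h, Finset.mem_powerset.1 hmem, by rw [FinMatroid.rank, hval]; simp [h]⟩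
  · refine ⟨∅, M.indep_empty, by simp, ?_⟩
    rw [FinMatroid.rank, hval]; simp [h]

lemma rank_mono {A B : Finset β} (h : A ⊆ B) : M.rank A ≤ M.rank B :=
  Finset.sup_mono (Finset.powerset_mono.2 h)

lemma rank_empty : M.rank (∅ : Finset β) = 0 := by
  simp [FinMatroid.rank]

lemma indep_of_card_le_rank {A : Finset β} (h : A.card ≤ M.rank A) : M.Indep A := by
  obtain ⟨I, hi, hsub, hcard⟩ := M.exists_basis A
  have : I = A := Finset.eq_of_subset_of_card_le hsub (by omega)
  exact this ▸ hi

lemma exists_basis_superset {I A : Finset β} (hI : M.Indep I) (hIA : I ⊆ A) :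
    ∃ J, M.Indep J ∧ I ⊆ J ∧ J ⊆ A ∧ J.card = M.rank A := by
  suffices h : ∀ n I, M.Indep I → I ⊆ A → M.rank A - I.card = n →
      ∃ J, M.Indep J ∧ I ⊆ J ∧ J ⊆ A ∧ J.card = M.rank A from h _ I hI hIA rfl
  intro n
  induction n with
  | zero =>
    intro I hI hIA h0
    have h1 : I.card ≤ M.rank A := M.card_le_rank hI hIA
    exact ⟨I, hI, subset_rfl, hIA, by omega⟩
  | succ n ih =>
    intro I hI hIA h0
    obtain ⟨B, hB, hBA, hBcard⟩ := M.exists_basis A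
    have hlt : I.card < B.card := by
      have := M.card_le_rank hI hIA; omega
    obtain ⟨e, he, hins⟩ := M.indep_exchange hI hB hlt
    have heB : e ∈ B := (Finset.mem_sdiff.1 he).1
    have heI : e ∉ I := (Finset.mem_sdiff.1 he).2
    have hsub : insert e I ⊆ A := Finset.insert_subset (hBA heB) hIA
    have hcard : (insert e I).card = I.card + 1 := Finset.card_insert_of_notMem heI
    obtain ⟨J, hJ, hIJ, hJA, hJc⟩ := ih (insert e I) hins hsub (by omega)
    exact ⟨J, hJ, (Finset.subset_insert e I).trans hIJ, hJA, hJc⟩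

lemma rank_submodular (A B : Finset β) :
    M.rank (A ∪ B) + M.rank (A ∩ B) ≤ M.rank A + M.rank B := by
  obtain ⟨I, hIi, hIsub, hIcard⟩ := M.exists_basis (A ∩ B)
  have hIAB : I ⊆ A ∪ B := hIsub.trans (Finset.inter_subset_left.trans Finset.subset_union_left)
  obtain ⟨J, hJ, hIJ, hJsub, hJcard⟩ := M.exists_basis_superset hIi hIAB
  have h1 : (J ∩ A).card ≤ M.rank A :=
    M.card_le_rank (M.indep_subset hJ Finset.inter_subset_left) Finset.inter_subset_right
  have h2 : (J ∩ B).card ≤ M.rank B :=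
    M.card_le_rank (M.indep_subset hJ Finset.inter_subset_left) Finset.inter_subset_right
  have h3 : I.card ≤ (J ∩ (A ∩ B)).card :=
    Finset.card_le_card (Finset.subset_inter hIJ hIsub)
  have hu : J ∩ A ∪ J ∩ B = J := by
    rw [← Finset.inter_union_distrib_left]
    exact Finset.inter_eq_left.2 hJsub
  have hi : (J ∩ A) ∩ (J ∩ B) = J ∩ (A ∩ B) := by
    ext x; simp; tauto
  have key : (J ∩ A).card + (J ∩ B).card = J.card + (J ∩ (A ∩ B)).card := by
    have := Finset.card_inter_add_card_union (J ∩ A) (J ∩ B)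
    rw [hu, hi] at this; omega
  omega


/-- Case of singleton color lists. -/
lemma rado_singletons {a : ℕ} (ha : 0 < a) (S : Finset β) (C : β → Finset (Fin a))
    (h1 : ∀ s ∈ S, (C s).card ≤ 1)
    (hcond : ∀ K ⊆ S, K.card ≤ ∑ j : Fin a, M.rank (K.filter (fun s => j ∈ C s))) :
    ∃ c : β → Fin a, (∀ s ∈ S, c s ∈ C s) ∧
      ∀ j : Fin a, M.Indep (S.filter (fun s => c s = j)) := by
  set c : β → Fin a := fun s => if h : (C s).Nonempty then h.choose else ⟨0, ha⟩ with hc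
  have hne : ∀ s ∈ S, (C s).Nonempty := by
    intro s hs
    by_contra hemp
    have hCs : C s = ∅ := Finset.not_nonempty_iff_eq_empty.1 hemp
    have := hcond {s} (Finset.singleton_subset_iff.2 hs)
    simp [hCs, Finset.filter_singleton, M.rank_empty] at this
  have hmem : ∀ s ∈ S, c s ∈ C s := by
    intro s hs
    have h := hne s hs
    simp only [hc, dif_pos h]
    exact h.choose_spec
  have hsingle : ∀ s ∈ S, C s = {c s} := by
    intro s hs
    exact (Finset.eq_of_subset_of_card_le (Finset.singleton_subset_iff.2 (hmem s hs))
      (by simpa using h1 s hs)).symm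
  refine ⟨c, hmem, fun j => ?_⟩
  set Sj := S.filter (fun s => c s = j) with hSj
  have hfilt : ∀ j' : Fin a, Sj.filter (fun s => j' ∈ C s) = if j' = j then Sj else ∅ := by
    intro j'
    ext s
    simp only [Finset.mem_filter, hSj]
    constructor
    · rintro ⟨⟨hsS, hcs⟩, hj'⟩
      rw [hsingle s hsS, Finset.mem_singleton] at hj'
      simp [hj', hcs, hsS]
    · intro hs
      split at hs
      · next heq =>
        subst heq
        rcases Finset.mem_filter.1 hs with ⟨hsS, hcs⟩
        refine ⟨⟨hsS, hcs⟩, ?_⟩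
        rw [hsingle s hsS, Finset.mem_singleton, hcs]
      · simp at hs
  have := hcond Sj (Finset.filter_subset _ _)
  have hsum : ∑ j' : Fin a, M.rank (Sj.filter (fun s => j' ∈ C s)) = M.rank Sj := by
    rw [Finset.sum_congr rfl (fun j' _ => by rw [hfilt j'])]
    simp [apply_ite M.rank, M.rank_empty, Finset.sum_ite_eq']
  rw [hsum] at this
  exact M.indep_of_card_le_rank this


/-- Rado-style theorem: color selection with independent color classes. -/
lemma rado {a : ℕ} (ha : 0 < a) (S : Finset β) :
    ∀ (n : ℕ) (C : β → Finset (Fin a)), (∑ s ∈ S, (C s).card) ≤ n →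
    (∀ K ⊆ S, K.card ≤ ∑ j : Fin a, M.rank (K.filter (fun s => j ∈ C s))) →
    ∃ c : β → Fin a, (∀ s ∈ S, c s ∈ C s) ∧
      ∀ j : Fin a, M.Indep (S.filter (fun s => c s = j)) := by
  intro n
  induction n with
  | zero =>
    intro C hn hcond
    refine M.rado_singletons ha S C (fun s hs => ?_) hcond
    have : (C s).card = 0 := by
      have := Finset.sum_eq_zero_iff.1 (Nat.le_zero.1 hn) s hs
      exact this
    omega
  | succ n ih =>
    intro C hn hcond
    by_cases h1 : ∀ s ∈ S, (C s).card ≤ 1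
    · exact M.rado_singletons ha S C h1 hcond
    · push_neg at h1
      obtain ⟨s₀, hs₀S, hs₀2⟩ := h1
      obtain ⟨x, hx, y, hy, hxy⟩ := Finset.one_lt_card.1 hs₀2
      -- the two candidate reduced color functions
      have key : ∀ z ∈ C s₀, (∑ s ∈ S, ((Function.update C s₀ ((C s₀).erase z)) s).card) ≤ n := by
        intro z hz
        rw [← Finset.add_sum_erase S _ hs₀S] at hn ⊢
        rw [Function.update_self, Finset.card_erase_of_mem hz,
          Finset.sum_congr rfl (fun s hs => by
            rw [Function.update_of_ne (Finset.ne_of_mem_erase hs)])]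
        have : 1 ≤ (C s₀).card := Finset.card_pos.2 ⟨z, hz⟩
        omega
      have lift : ∀ z, (∀ K ⊆ S, K.card ≤ ∑ j : Fin a,
            M.rank (K.filter (fun s => j ∈ (Function.update C s₀ ((C s₀).erase z)) s))) →
          z ∈ C s₀ →
          ∃ c : β → Fin a, (∀ s ∈ S, c s ∈ C s) ∧
            ∀ j : Fin a, M.Indep (S.filter (fun s => c s = j)) := by
        intro z hcond' hz
        obtain ⟨c, hc1, hc2⟩ := ih _ (key z hz) hcond'
        refine ⟨c, fun s hs => ?_, hc2⟩
        have := hc1 s hs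
        by_cases hss : s = s₀
        · subst hss
          rw [Function.update_self] at this
          exact Finset.mem_of_mem_erase this
        · rwa [Function.update_of_ne hss] at this
      by_cases hcx : ∀ K ⊆ S, K.card ≤ ∑ j : Fin a,
          M.rank (K.filter (fun s => j ∈ (Function.update C s₀ ((C s₀).erase x)) s))
      · exact lift x hcx hx
      by_cases hcy : ∀ K ⊆ S, K.card ≤ ∑ j : Fin a,
          M.rank (K.filter (fun s => j ∈ (Function.update C s₀ ((C s₀).erase y)) s))
      · exact lift y hcy hy
      -- both removals fail: contradiction via submodularity
      exfalso
      push_neg at hcx hcy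
      obtain ⟨Kx, hKxS, hKx⟩ := hcx
      obtain ⟨Ky, hKyS, hKy⟩ := hcy
      set Cx := Function.update C s₀ ((C s₀).erase x) with hCx
      set Cy := Function.update C s₀ ((C s₀).erase y) with hCy
      have hne : ∀ (K : Finset β) (D : β → Finset (Fin a)), K ⊆ S →
          (∀ s ∈ K, D s = C s) →
          (∑ j : Fin a, M.rank (K.filter (fun s => j ∈ D s))) < K.card → False := by
        intro K D hKS hDC hlt
        have heq : ∀ j : Fin a, K.filter (fun s => j ∈ D s) = K.filter (fun s => j ∈ C s) := by
          intro j
          apply Finset.filter_congr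
          intro s hs
          rw [hDC s hs]
        rw [Finset.sum_congr rfl (fun j _ => by rw [heq j])] at hlt
        exact absurd (hcond K hKS) (by omega)
      have hs₀Kx : s₀ ∈ Kx := by
        by_contra hnot
        exact hne Kx Cx hKxS
          (fun s hs => Function.update_of_ne (fun h => hnot (by rwa [h] at hs)) _ _) hKx
      have hs₀Ky : s₀ ∈ Ky := by
        by_contra hnot
        exact hne Ky Cy hKyS
          (fun s hs => Function.update_of_ne (fun h => hnot (by rwa [h] at hs)) _ _) hKy
      have hsub1 : ∀ j : Fin a, (Kx ∪ Ky).filter (fun s => j ∈ C s) ⊆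
          (Kx.filter (fun s => j ∈ Cx s)) ∪ (Ky.filter (fun s => j ∈ Cy s)) := by
        intro j s hs
        rcases Finset.mem_filter.1 hs with ⟨hsU, hjC⟩
        by_cases hss : s = s₀
        · subst hss
          by_cases hjx : j = x
          · refine Finset.mem_union_right _ (Finset.mem_filter.2 ⟨hs₀Ky, ?_⟩)
            rw [hCy, Function.update_self]
            exact Finset.mem_erase.2 ⟨hjx ▸ hxy, hjC⟩
          · refine Finset.mem_union_left _ (Finset.mem_filter.2 ⟨hs₀Kx, ?_⟩)
            rw [hCx, Function.update_self]
            exact Finset.mem_erase.2 ⟨hjx, hjC⟩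
        · rcases Finset.mem_union.1 hsU with h | h
          · refine Finset.mem_union_left _ (Finset.mem_filter.2 ⟨h, ?_⟩)
            rw [hCx, Function.update_of_ne hss]; exact hjC
          · refine Finset.mem_union_right _ (Finset.mem_filter.2 ⟨h, ?_⟩)
            rw [hCy, Function.update_of_ne hss]; exact hjC
      have hsub2 : ∀ j : Fin a, ((Kx ∩ Ky).erase s₀).filter (fun s => j ∈ C s) ⊆
          (Kx.filter (fun s => j ∈ Cx s)) ∩ (Ky.filter (fun s => j ∈ Cy s)) := by
        intro j s hs
        rcases Finset.mem_filter.1 hs with ⟨hsE, hjC⟩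
        have hss : s ≠ s₀ := Finset.ne_of_mem_erase hsE
        have hsI : s ∈ Kx ∩ Ky := Finset.mem_of_mem_erase hsE
        refine Finset.mem_inter.2 ⟨Finset.mem_filter.2 ⟨(Finset.mem_inter.1 hsI).1, ?_⟩,
          Finset.mem_filter.2 ⟨(Finset.mem_inter.1 hsI).2, ?_⟩⟩
        · rw [hCx, Function.update_of_ne hss]; exact hjC
        · rw [hCy, Function.update_of_ne hss]; exact hjC
      have big : ∀ j : Fin a,
          M.rank ((Kx ∪ Ky).filter (fun s => j ∈ C s)) +
            M.rank (((Kx ∩ Ky).erase s₀).filter (fun s => j ∈ C s)) ≤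
          M.rank (Kx.filter (fun s => j ∈ Cx s)) + M.rank (Ky.filter (fun s => j ∈ Cy s)) := by
        intro j
        calc M.rank ((Kx ∪ Ky).filter (fun s => j ∈ C s)) +
              M.rank (((Kx ∩ Ky).erase s₀).filter (fun s => j ∈ C s))
            ≤ M.rank ((Kx.filter (fun s => j ∈ Cx s)) ∪ (Ky.filter (fun s => j ∈ Cy s))) +
              M.rank ((Kx.filter (fun s => j ∈ Cx s)) ∩ (Ky.filter (fun s => j ∈ Cy s))) :=
              add_le_add (M.rank_mono (hsub1 j)) (M.rank_mono (hsub2 j))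
          _ ≤ _ := M.rank_submodular _ _
      have sum_big := Finset.sum_le_sum (s := (Finset.univ : Finset (Fin a))) (fun j _ => big j)
      rw [Finset.sum_add_distrib, Finset.sum_add_distrib] at sum_big
      have hU := hcond (Kx ∪ Ky) (Finset.union_subset hKxS hKyS)
      have hI := hcond ((Kx ∩ Ky).erase s₀)
        (((Kx ∩ Ky).erase_subset s₀).trans (Finset.inter_subset_left.trans hKxS))
      have hcards : (Kx ∪ Ky).card + (Kx ∩ Ky).card = Kx.card + Ky.card :=
        Finset.card_union_add_card_inter _ _
      have hs₀I : s₀ ∈ Kx ∩ Ky := Finset.mem_inter.2 ⟨hs₀Kx, hs₀Ky⟩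
      have herase : ((Kx ∩ Ky).erase s₀).card = (Kx ∩ Ky).card - 1 :=
        Finset.card_erase_of_mem hs₀I
      have hpos : 1 ≤ (Kx ∩ Ky).card := Finset.card_pos.2 ⟨s₀, hs₀I⟩
      omega

end FinMatroid

/-- **`α`-approximate independence equals coverability by `α` independent sets.**
For a matroid `M`, a set `S ⊆ N` and a positive integer `a`, one has `|T| ≤ a · r(T)`
for every `T ⊆ S` if and only if `S` is the union of (at most) `a` independent sets. -/
theorem approx_independent_iff_union_of_independent
    {β : Type*} (M : FinMatroid β) (S : Finset β) (hS : S ⊆ M.E)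
    (a : ℕ) (ha : 1 ≤ a) :
    (∀ T ⊆ S, T.card ≤ a * M.rank T) ↔
    (∃ I : Fin a → Finset β, (∀ j, M.Indep (I j)) ∧ S = Finset.univ.biUnion I) := by
  constructor
  · intro h
    have hcond : ∀ K ⊆ S, K.card ≤ ∑ j : Fin a,
        M.rank (K.filter (fun s => j ∈ (Finset.univ : Finset (Fin a)))) := by
      intro K hK
      rw [Finset.sum_congr rfl (fun j _ => by
        rw [Finset.filter_true_of_mem (fun s _ => Finset.mem_univ j)])]
      rw [Finset.sum_const, Finset.card_univ, Fintype.card_fin, smul_eq_mul]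
      exact h K hK
    obtain ⟨c, _, hc2⟩ := M.rado ha S (∑ s ∈ S, (Finset.univ : Finset (Fin a)).card)
      (fun _ => (Finset.univ : Finset (Fin a))) le_rfl hcond
    refine ⟨fun j => S.filter (fun s => c s = j), hc2, ?_⟩
    ext s
    simp only [Finset.mem_biUnion, Finset.mem_univ, Finset.mem_filter, true_and]
    exact ⟨fun hs => ⟨c s, hs, rfl⟩, fun ⟨j, hj, _⟩ => hj⟩
  · rintro ⟨I, hI, hSU⟩
    intro T hT
    have hT' : T = Finset.univ.biUnion (fun j => T ∩ I j) := by
      ext t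
      simp only [Finset.mem_biUnion, Finset.mem_univ, Finset.mem_inter, true_and]
      constructor
      · intro ht
        have hts : t ∈ Finset.univ.biUnion I := by rw [← hSU]; exact hT ht
        obtain ⟨j, _, hj⟩ := Finset.mem_biUnion.1 hts
        exact ⟨j, ht, hj⟩
      · rintro ⟨j, ht, _⟩; exact ht
    calc T.card = (Finset.univ.biUnion (fun j => T ∩ I j)).card := congrArg Finset.card hT'
      _ ≤ ∑ j : Fin a, (T ∩ I j).card := Finset.card_biUnion_le
      _ ≤ ∑ j : Fin a, M.rank T := Finset.sum_le_sum (fun j _ =>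
          M.card_le_rank (M.indep_subset (hI j) Finset.inter_subset_right)
            Finset.inter_subset_left)
      _ = a * M.rank T := by
          rw [Finset.sum_const, Finset.card_univ, Fintype.card_fin, smul_eq_mul]
end

section
/- Let $M' = (N', \mathcal{I}')$ be a matroid on a finite ground set $N'$ with rank function $r'$, and let $q$ be a positive integer. Suppose there exists $x : N' \to \mathbb{R}$ with $0 < x(e)$ for all $e \in N'$, $\sum_{e \in A} x(e) \le r'(A)$ for all $A \subseteq N'$, $\sum_{e \in N'} x(e) = r'(N')$, and $|N'| - \sum_{e \in N'} x(e) \le q - 1$. Then $N'$ can be partitioned into at most $q$ independent sets of $M'$; in particular, every subset of $N'$ is $q$-approximately independent in $M'$. -/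
open scoped Classical BigOperators

/-- Rank is at most cardinality. -/
lemma FinMatroid.rank_le_card {α : Type*} (M : FinMatroid α) (A : Finset α) :
    M.rank A ≤ A.card := by
  refine Finset.sup_le fun I hI => ?_
  rw [Finset.mem_powerset] at hI
  split_ifs
  · exact Finset.card_le_card hI
  · exact Nat.zero_le _

/-- Any independent subset gives a lower bound on rank. -/
lemma FinMatroid.card_le_rank_s6 {α : Type*} (M : FinMatroid α) {I A : Finset α}
    (hI : M.Indep I) (hIA : I ⊆ A) : I.card ≤ M.rank A := by
  have h := Finset.le_sup (f := fun I => if M.Indep I then I.card else 0)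
    (Finset.mem_powerset.2 hIA)
  simpa [hI, FinMatroid.rank] using h

/-- There exists a basis: an independent subset achieving the rank. -/
lemma FinMatroid.exists_basis_s6 {α : Type*} (M : FinMatroid α) (A : Finset α) :
    ∃ B ⊆ A, M.Indep B ∧ B.card = M.rank A := by
  classical
  obtain ⟨I, hI, hEq⟩ := Finset.exists_mem_eq_sup A.powerset
    (Finset.powerset_nonempty A) (fun I => if M.Indep I then I.card else 0)
  rw [Finset.mem_powerset] at hI
  by_cases hInd : M.Indep I
  · exact ⟨I, hI, hInd, by simp [FinMatroid.rank, hEq, hInd]⟩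
  · refine ⟨∅, Finset.empty_subset _, M.indep_empty, ?_⟩
    simp [FinMatroid.rank, hEq, hInd]

/-- **Dropping a matroid constraint is safe (key step of Lemma 3).**
If there is a point `x` with full support in the matroid polytope of `M'` that is tight
on the whole ground set `N'` and satisfies `|N'| - x(N') ≤ q - 1`, then `N'` can be
partitioned into at most `q` independent sets of `M'`; in particular every subset of
`N'` is `q`-approximately independent in `M'`. -/
theorem drop_matroid_partition
    {β : Type*} (M' : FinMatroid β) (q : ℕ) (hq : 1 ≤ q)
    (x : β → ℝ)
    (hx_pos : ∀ e ∈ M'.E, 0 < x e)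
    (hx : ∀ A ⊆ M'.E, ∑ e ∈ A, x e ≤ (M'.rank A : ℝ))
    (hx_tight : ∑ e ∈ M'.E, x e = (M'.rank M'.E : ℝ))
    (hx_gap : (M'.E.card : ℝ) - ∑ e ∈ M'.E, x e ≤ (q : ℝ) - 1) :
    (∃ I : Fin q → Finset β, (∀ j, M'.Indep (I j)) ∧
        (∀ j j', j ≠ j' → Disjoint (I j) (I j')) ∧
        M'.E = Finset.univ.biUnion I) ∧
    (∀ T ⊆ M'.E, T.card ≤ q * M'.rank T) := by
  classical
  -- every singleton in the ground set is independent
  have hsing : ∀ e ∈ M'.E, M'.Indep {e} := by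
    intro e he
    have h1 : (0 : ℝ) < x e := hx_pos e he
    have h2 : ∑ a ∈ ({e} : Finset β), x a ≤ (M'.rank {e} : ℝ) :=
      hx {e} (by simpa using he)
    simp only [Finset.sum_singleton] at h2
    have hr : 1 ≤ M'.rank {e} := by
      by_contra hcon
      have : M'.rank {e} = 0 := by omega
      rw [this] at h2
      norm_num at h2
      linarith
    obtain ⟨B, hBsub, hBind, hBcard⟩ := M'.exists_basis_s6 {e}
    have : B = {e} := by
      have hc : 1 ≤ B.card := hBcard ▸ hr
      exact Finset.eq_of_subset_of_card_le hBsub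
        (by rw [Finset.card_singleton]; omega)
    exact this ▸ hBind
  -- every element has x e ≤ 1
  have hxe_le : ∀ e ∈ M'.E, x e ≤ 1 := by
    intro e he
    have h2 : ∑ a ∈ ({e} : Finset β), x a ≤ (M'.rank {e} : ℝ) :=
      hx {e} (by simpa using he)
    simp only [Finset.sum_singleton] at h2
    have := M'.rank_le_card {e}
    simp at this
    calc x e ≤ (M'.rank {e} : ℝ) := h2
      _ ≤ 1 := by exact_mod_cast this
  -- pick a basis of the ground set
  obtain ⟨B, hBsub, hBind, hBcard⟩ := M'.exists_basis_s6 M'.E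
  set D : Finset β := M'.E \ B with hDdef
  have hDsub : D ⊆ M'.E := Finset.sdiff_subset
  have hDcard : (D.card : ℝ) ≤ (q : ℝ) - 1 := by
    have h1 : D.card = M'.E.card - B.card := Finset.card_sdiff_of_subset hBsub
    have h2 : B.card ≤ M'.E.card := Finset.card_le_card hBsub
    have h3 : (D.card : ℝ) = (M'.E.card : ℝ) - (B.card : ℝ) := by
      rw [h1]; push_cast [Nat.cast_sub h2]; ring
    rw [h3, hBcard]
    calc (M'.E.card : ℝ) - (M'.rank M'.E : ℝ)
        = (M'.E.card : ℝ) - ∑ e ∈ M'.E, x e := by rw [hx_tight]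
      _ ≤ (q : ℝ) - 1 := hx_gap
  have hDlt : D.card < q := by
    have : (D.card : ℝ) < (q : ℝ) := by linarith [hDcard]
    exact_mod_cast this
  -- the list of leftover elements
  set L : List β := D.toList with hLdef
  have hLlen : L.length = D.card := Finset.length_toList D
  have hLnd : L.Nodup := Finset.nodup_toList D
  have hLmem : ∀ a, a ∈ L ↔ a ∈ D := fun a => Finset.mem_toList
  -- define the partition
  set I : Fin q → Finset β := fun j =>
    if (j : ℕ) = 0 then B
    else if h : (j : ℕ) - 1 < L.length then {L.get ⟨(j : ℕ) - 1, h⟩} else ∅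
    with hIdef
  have hmem : ∀ (j : Fin q) a, a ∈ I j →
      ((j : ℕ) = 0 ∧ a ∈ B) ∨
      ((j : ℕ) ≠ 0 ∧ a ∈ D ∧ ∃ h : (j : ℕ) - 1 < L.length, a = L.get ⟨(j : ℕ) - 1, h⟩) := by
    intro j a ha
    simp only [hIdef] at ha
    split_ifs at ha with h1 h2
    · exact Or.inl ⟨h1, ha⟩
    · simp only [Finset.mem_singleton] at ha
      refine Or.inr ⟨h1, ?_, h2, ha⟩
      rw [ha]
      exact (hLmem _).1 (List.get_mem L _)
    · simp at ha
  constructor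
  · refine ⟨I, ?_, ?_, ?_⟩
    · intro j
      simp only [hIdef]
      split_ifs with h1 h2
      · exact hBind
      · exact hsing _ (hDsub ((hLmem _).1 (List.get_mem L _)))
      · exact M'.indep_empty
    · intro j j' hne
      rw [Finset.disjoint_left]
      intro a haj haj'
      rcases hmem j a haj with ⟨hj0, haB⟩ | ⟨hj0, haD, hlt, hget⟩ <;>
        rcases hmem j' a haj' with ⟨hj0', haB'⟩ | ⟨hj0', haD', hlt', hget'⟩
      · exact hne (Fin.ext (hj0.trans hj0'.symm))
      · exact absurd haB (Finset.mem_sdiff.1 haD').2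
      · exact absurd haB' (Finset.mem_sdiff.1 haD).2
      · have heq : L.get ⟨(j : ℕ) - 1, hlt⟩ = L.get ⟨(j' : ℕ) - 1, hlt'⟩ :=
          hget ▸ hget' ▸ rfl
        have hidx : (j : ℕ) - 1 = (j' : ℕ) - 1 :=
          Fin.val_eq_of_eq ((List.Nodup.get_inj_iff hLnd).1 heq)
        exact hne (Fin.ext (by omega))
    · -- union is the ground set
      ext a
      simp only [Finset.mem_biUnion, Finset.mem_univ, true_and]
      constructor
      · intro ha
        by_cases haB : a ∈ B
        · refine ⟨⟨0, by omega⟩, ?_⟩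
          simp [hIdef, haB]
        · have haD : a ∈ D := by simp [hDdef, ha, haB]
          obtain ⟨n, hn⟩ := List.mem_iff_get.1 ((hLmem a).2 haD)
          have hnq : (n : ℕ) + 1 < q := by
            have : (n : ℕ) < L.length := n.2
            omega
          refine ⟨⟨(n : ℕ) + 1, hnq⟩, ?_⟩
          have hne0 : ((⟨(n : ℕ) + 1, hnq⟩ : Fin q) : ℕ) ≠ 0 := by simp
          have hlt : ((⟨(n : ℕ) + 1, hnq⟩ : Fin q) : ℕ) - 1 < L.length := by
            simp only []; omega
          simp only [hIdef, if_neg hne0, dif_pos hlt, Finset.mem_singleton]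
          have hfin : (⟨((⟨(n : ℕ) + 1, hnq⟩ : Fin q) : ℕ) - 1, hlt⟩ : Fin L.length) = n :=
            Fin.ext (by simp)
          rw [hfin, hn]
      · rintro ⟨j, hj⟩
        rcases hmem j a hj with ⟨_, haB⟩ | ⟨_, haD, _⟩
        · exact hBsub haB
        · exact hDsub haD
  · -- second part: q-approximate independence
    intro T hT
    rcases Finset.eq_empty_or_nonempty T with rfl | ⟨e, he⟩
    · simp
    · have hrT : 1 ≤ M'.rank T := by
        have := M'.card_le_rank_s6 (hsing e (hT he)) (Finset.singleton_subset_iff.2 he)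
        simpa using this
      have key : (T.card : ℝ) ≤ (M'.rank T : ℝ) + ((q : ℝ) - 1) := by
        have hsum : ∑ e ∈ T, (1 - x e) ≤ ∑ e ∈ M'.E, (1 - x e) := by
          refine Finset.sum_le_sum_of_subset_of_nonneg hT ?_
          intro i hi _
          have := hxe_le i hi
          linarith
        have hT' : ∑ e ∈ T, (1 - x e) = (T.card : ℝ) - ∑ e ∈ T, x e := by
          rw [Finset.sum_sub_distrib]; simp
        have hE' : ∑ e ∈ M'.E, (1 - x e) = (M'.E.card : ℝ) - ∑ e ∈ M'.E, x e := by
          rw [Finset.sum_sub_distrib]; simp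
        have hxT := hx T hT
        rw [hT', hE'] at hsum
        linarith [hx_gap]
      have key2 : T.card ≤ M'.rank T + (q - 1) := by
        have hcast : ((M'.rank T + (q - 1) : ℕ) : ℝ) = (M'.rank T : ℝ) + ((q : ℝ) - 1) := by
          push_cast [Nat.cast_sub hq]; ring
        have : (T.card : ℝ) ≤ ((M'.rank T + (q - 1) : ℕ) : ℝ) := by rw [hcast]; exact key
        exact_mod_cast this
      obtain ⟨q', rfl⟩ : ∃ q', q = q' + 1 := ⟨q - 1, by omega⟩
      have : q' ≤ q' * M'.rank T := Nat.le_mul_of_pos_right q' hrT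
      calc T.card ≤ M'.rank T + q' := by simpa using key2
        _ ≤ M'.rank T + q' * M'.rank T := by omega
        _ = (q' + 1) * M'.rank T := by ring
end
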